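/- Let p > 0, λ > 0, μ > 0, q > 0, r > 0, and let W^{(q)} be the explicit q-scale function of the Cramér–Lundberg model with derivative W^{(q)′}. Then e^{−λr}[ p W^{(q)′}(pr) + ∫₀^{pr} W^{(q)′}(pr − y) ((pr − y)/r) e^{−μy} Σ_{m=0}^∞ ((μλr)^{m+1}/(m!(m+1)!)) y^m dy ] = C, where C = e^{−λr}[ p W^{(q)′}(pr) + A⁻ q⁺(q) e^{q⁺(q)pr} Σ_{m=0}^∞ ((pr(q⁻(q)+μ))^m/(m!(m+1)!)) γ(m+1, (q⁺(q)+μ)pr) (pr(q⁺(q)+μ) − (m+1)) − A⁺ q⁻(q) e^{q⁻(q)pr} Σ_{m=0}^∞ ((pr(q⁺(q)+μ))^m/(m!(m+1)!)) γ(m+1, (q⁻(q)+μ)pr) (pr(q⁻(q)+μ) − (m+1)) + (e^{−μpr}/(pr)) Σ_{m=0}^∞ ((pλμr²)^{m+1}/(m!(m+1)!)) ]. -/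

import Mathlib

open MeasureTheory Nat
set_option linter.unusedSectionVars false

/- Cramér–Lundberg model: X_t = pt − Σ_{i≤N_t}U_i with Poisson(λ) arrivals and
   Exp(μ) claims.  The law of X_r is that of pr − S_r with
   ℙ(S_r ∈ dy) = e^{−λr}(δ₀(dy) + e^{−μy}Σ_m ((μλr)^{m+1}/(m!(m+1)!))y^m dy),
   so the left-hand side below equals ∫₀^∞ W^{(q)′}(z)(z/r)ℙ(X_r ∈ dz); the
   right-hand side is the explicit constant C. -/

noncomputable def qp (p lam μ q : ℝ) : ℝ :=
  (q + lam - μ * p + Real.sqrt ((q + lam - μ * p) ^ 2 + 4 * p * q * μ)) / (2 * p)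

noncomputable def qm (p lam μ q : ℝ) : ℝ :=
  (q + lam - μ * p - Real.sqrt ((q + lam - μ * p) ^ 2 + 4 * p * q * μ)) / (2 * p)

noncomputable def Ap (p lam μ q : ℝ) : ℝ := (μ + qp p lam μ q) / (qp p lam μ q - qm p lam μ q)

noncomputable def Am (p lam μ q : ℝ) : ℝ := (μ + qm p lam μ q) / (qp p lam μ q - qm p lam μ q)

/-- The q-scale function W^{(q)} of X (its formula on [0,∞)). -/
noncomputable def Wq (p lam μ q x : ℝ) : ℝ :=
  1 / p * (Ap p lam μ q * Real.exp (qp p lam μ q * x) -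
    Am p lam μ q * Real.exp (qm p lam μ q * x))

/-- Lower incomplete gamma function γ(a,x) = ∫₀ˣ t^{a−1}e^{−t} dt. -/
noncomputable def lowerGamma (a x : ℝ) : ℝ :=
  ∫ t in (0 : ℝ)..x, t ^ (a - 1) * Real.exp (-t)

/-- The explicit constant C. -/
noncomputable def Cconst (p lam μ q r : ℝ) : ℝ :=
  Real.exp (-lam * r) *
    (p * deriv (Wq p lam μ q) (p * r) +
      Am p lam μ q * qp p lam μ q * Real.exp (qp p lam μ q * (p * r)) *
        (∑' m : ℕ, (p * r * (qm p lam μ q + μ)) ^ m /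
            ((Nat.factorial m : ℝ) * (Nat.factorial (m + 1) : ℝ)) *
          lowerGamma ((m : ℝ) + 1) ((qp p lam μ q + μ) * (p * r)) *
          (p * r * (qp p lam μ q + μ) - ((m : ℝ) + 1))) -
      Ap p lam μ q * qm p lam μ q * Real.exp (qm p lam μ q * (p * r)) *
        (∑' m : ℕ, (p * r * (qp p lam μ q + μ)) ^ m /
            ((Nat.factorial m : ℝ) * (Nat.factorial (m + 1) : ℝ)) *
          lowerGamma ((m : ℝ) + 1) ((qm p lam μ q + μ) * (p * r)) *
          (p * r * (qm p lam μ q + μ) - ((m : ℝ) + 1))) +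
      Real.exp (-μ * (p * r)) / (p * r) *
        (∑' m : ℕ, (p * lam * μ * r ^ 2) ^ (m + 1) /
          ((Nat.factorial m : ℝ) * (Nat.factorial (m + 1) : ℝ))))

section facts
variable {p lam μ q : ℝ} (hp : 0 < p) (hlam : 0 < lam) (hμ : 0 < μ) (hq : 0 < q)
include hp hlam hμ hq

lemma qp_mul_qm : qp p lam μ q * qm p lam μ q = -(q * μ) / p := by
  have hD : (0:ℝ) ≤ (q + lam - μ * p) ^ 2 + 4 * p * q * μ := by positivity
  have := Real.sq_sqrt hD
  rw [qp, qm]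
  generalize Real.sqrt ((q + lam - μ * p) ^ 2 + 4 * p * q * μ) = s at this ⊢
  field_simp
  nlinarith [this]

lemma qp_add_qm : qp p lam μ q + qm p lam μ q = (q + lam - μ * p) / p := by
  rw [qp, qm]; field_simp; ring

lemma qp_pos : 0 < qp p lam μ q := by
  have hD : (q + lam - μ * p) ^ 2 < (q + lam - μ * p) ^ 2 + 4 * p * q * μ := by
    nlinarith [mul_pos (mul_pos hp hq) hμ]
  have h2 : |q + lam - μ * p| < Real.sqrt ((q + lam - μ * p) ^ 2 + 4 * p * q * μ) := by
    rw [← Real.sqrt_sq_eq_abs]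
    exact Real.sqrt_lt_sqrt (sq_nonneg _) hD
  have := abs_lt.mp h2
  rw [qp]
  apply _root_.div_pos (by linarith) (by linarith)
  
lemma qp_sub_qm_pos : 0 < qp p lam μ q - qm p lam μ q := by
  have hD : (0:ℝ) < (q + lam - μ * p) ^ 2 + 4 * p * q * μ := by
    nlinarith [mul_pos (mul_pos hp hq) hμ, sq_nonneg (q + lam - μ * p)]
  have : 0 < Real.sqrt ((q + lam - μ * p) ^ 2 + 4 * p * q * μ) := Real.sqrt_pos.mpr hD
  rw [qp, qm]
  rw [div_sub_div_same]
  apply _root_.div_pos (by linarith) (by linarith)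

lemma beta_mul : (qp p lam μ q + μ) * (qm p lam μ q + μ) = μ * lam / p := by
  have h1 := qp_mul_qm hp hlam hμ hq
  have h2 := qp_add_qm hp hlam hμ hq
  have : (qp p lam μ q + μ) * (qm p lam μ q + μ)
      = qp p lam μ q * qm p lam μ q + μ * (qp p lam μ q + qm p lam μ q) + μ^2 := by ring
  rw [this, h1, h2]
  field_simp
  ring

lemma betap_pos : 0 < qp p lam μ q + μ := by
  have := qp_pos hp hlam hμ hq; linarith

lemma betam_pos : 0 < qm p lam μ q + μ := by
  have h := beta_mul hp hlam hμ hq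
  have h2 := betap_pos hp hlam hμ hq
  nlinarith [div_pos (mul_pos hμ hlam) hp]

end facts

lemma hasDerivAt_Wq (p lam μ q x : ℝ) :
    HasDerivAt (Wq p lam μ q)
      (1 / p * (Ap p lam μ q * (qp p lam μ q * Real.exp (qp p lam μ q * x)) -
        Am p lam μ q * (qm p lam μ q * Real.exp (qm p lam μ q * x)))) x := by
  have h1 : HasDerivAt (fun x : ℝ => Real.exp (qp p lam μ q * x))
      (Real.exp (qp p lam μ q * x) * qp p lam μ q) x := by
    simpa using ((hasDerivAt_id x).const_mul (qp p lam μ q)).exp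
  have h2 : HasDerivAt (fun x : ℝ => Real.exp (qm p lam μ q * x))
      (Real.exp (qm p lam μ q * x) * qm p lam μ q) x := by
    simpa using ((hasDerivAt_id x).const_mul (qm p lam μ q)).exp
  have := (((h1.const_mul (Ap p lam μ q)).sub (h2.const_mul (Am p lam μ q))).const_mul (1/p))
  convert this using 1
  · rfl
  · rfl
  · rfl
  · ring
  
lemma deriv_Wq (p lam μ q : ℝ) : deriv (Wq p lam μ q) = fun x =>
    1 / p * (Ap p lam μ q * (qp p lam μ q * Real.exp (qp p lam μ q * x)) -
      Am p lam μ q * (qm p lam μ q * Real.exp (qm p lam μ q * x))) := by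
  funext x
  exact (hasDerivAt_Wq p lam μ q x).deriv

lemma lowerGamma_nat (m : ℕ) (x : ℝ) :
    lowerGamma ((m : ℝ) + 1) x = ∫ t in (0:ℝ)..x, t ^ m * Real.exp (-t) := by
  unfold lowerGamma
  norm_num [Real.rpow_natCast]

section keyint
variable {β a : ℝ} (hβ : β ≠ 0)

lemma int_pow_exp (m : ℕ) (hβ : β ≠ 0) :
    ∫ y in (0:ℝ)..a, y ^ m * Real.exp (-(β * y))
      = lowerGamma ((m : ℝ) + 1) (β * a) / β ^ (m + 1) := by
  have h := intervalIntegral.integral_comp_mul_left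
    (fun t => t ^ m * Real.exp (-t)) (a := 0) (b := a) hβ
  rw [lowerGamma_nat]
  simp only [mul_zero] at h
  have e : ∀ y : ℝ, (β * y) ^ m * Real.exp (-(β * y)) = β ^ m * (y ^ m * Real.exp (-(β * y))) := by
    intro y; rw [mul_pow]; ring
  simp only [e, intervalIntegral.integral_const_mul, smul_eq_mul] at h
  rw [eq_div_iff (pow_ne_zero _ hβ)]
  have e2 : (∫ y in (0:ℝ)..a, y ^ m * Real.exp (-(β * y))) * β ^ (m + 1)
      = β * (β ^ m * ∫ y in (0:ℝ)..a, y ^ m * Real.exp (-(β * y))) := by ring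
  rw [e2, h]
  field_simp

lemma ftc_pow_exp (m : ℕ) :
    ∫ y in (0:ℝ)..a, (((m:ℝ) + 1) * (y ^ m * Real.exp (-(β * y)))
        - β * (y ^ (m + 1) * Real.exp (-(β * y))))
      = a ^ (m + 1) * Real.exp (-(β * a)) := by
  have key : ∀ y : ℝ, HasDerivAt (fun y : ℝ => y ^ (m + 1) * Real.exp (-(β * y)))
      (((m:ℝ) + 1) * (y ^ m * Real.exp (-(β * y))) - β * (y ^ (m + 1) * Real.exp (-(β * y)))) y := by
    intro y
    have h1 : HasDerivAt (fun y : ℝ => y ^ (m + 1)) (((m:ℝ) + 1) * y ^ m) y := by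
      simpa using hasDerivAt_pow (m + 1) y
    have h2 : HasDerivAt (fun y : ℝ => Real.exp (-(β * y))) (Real.exp (-(β * y)) * (-β)) y := by
      simpa using (((hasDerivAt_id y).const_mul β).neg).exp
    have := h1.mul h2
    convert this using 1
    · rfl
    · rfl
    · rfl
    ring
  have := intervalIntegral.integral_eq_sub_of_hasDerivAt (fun y _ => key y)
    (Continuous.intervalIntegrable (by continuity) 0 a)
  rw [this]
  simp

lemma key_integral (m : ℕ) (hβ : β ≠ 0) :
    ∫ y in (0:ℝ)..a, (a - y) * Real.exp (-(β * y)) * y ^ m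
      = (lowerGamma ((m : ℝ) + 1) (β * a) * (β * a - ((m:ℝ) + 1))
          + (β * a) ^ (m + 1) * Real.exp (-(β * a))) / β ^ (m + 2) := by
  have e1 : ∀ y : ℝ, (a - y) * Real.exp (-(β * y)) * y ^ m
      = a * (y ^ m * Real.exp (-(β * y))) - y ^ (m + 1) * Real.exp (-(β * y)) := by
    intro y; ring
  have i1 : ∀ k : ℕ, IntervalIntegrable (fun y : ℝ => y ^ k * Real.exp (-(β * y))) volume 0 a :=
    fun k => Continuous.intervalIntegrable (by continuity) 0 a
  rw [intervalIntegral.integral_congr (g := fun y => a * (y ^ m * Real.exp (-(β * y)))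
      - y ^ (m + 1) * Real.exp (-(β * y))) (fun y _ => e1 y),
    intervalIntegral.integral_sub ((i1 m).const_mul a) (i1 (m+1)),
    intervalIntegral.integral_const_mul, int_pow_exp m hβ, int_pow_exp (m+1) hβ]
  have hrec : lowerGamma (((m + 1 : ℕ):ℝ) + 1) (β * a)
      = ((m:ℝ) + 1) * lowerGamma ((m:ℝ) + 1) (β * a) - (β*a) ^ (m+1) * Real.exp (-(β*a)) := by
    have h1 := int_pow_exp (a := a) m hβ
    have h2 := int_pow_exp (a := a) (m + 1) hβ
    have h3 := ftc_pow_exp (β := β) (a := a) m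
    rw [intervalIntegral.integral_sub ((i1 m).const_mul _) ((i1 (m+1)).const_mul β),
      intervalIntegral.integral_const_mul, intervalIntegral.integral_const_mul, h1, h2] at h3
    have hb1 : (β:ℝ) ^ (m + 1) ≠ 0 := pow_ne_zero _ hβ
    field_simp at h3
    apply mul_right_cancel₀ (b := β ^ (m+1) * β) (mul_ne_zero hb1 hβ)
    push_cast at h3 ⊢
    linear_combination -h3
  rw [hrec]
  have hb2 : (β:ℝ) ^ (m + 2) ≠ 0 := pow_ne_zero _ hβ
  have hb1 : (β:ℝ) ^ (m + 1) ≠ 0 := pow_ne_zero _ hβ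
  field_simp
  ring

end keyint

lemma lowerGamma_nonneg (m : ℕ) {x : ℝ} (hx : 0 ≤ x) : 0 ≤ lowerGamma ((m:ℝ) + 1) x := by
  rw [lowerGamma_nat]
  apply intervalIntegral.integral_nonneg hx
  intro t ht
  exact mul_nonneg (pow_nonneg ht.1 m) (Real.exp_nonneg _)

lemma lowerGamma_le (m : ℕ) {x : ℝ} (hx : 0 ≤ x) : lowerGamma ((m:ℝ) + 1) x ≤ x ^ (m + 1) := by
  rw [lowerGamma_nat]
  have h : ∫ t in (0:ℝ)..x, x ^ m ∂volume = x ^ (m+1) := by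
    rw [intervalIntegral.integral_const, smul_eq_mul]
    ring
  rw [← h]
  apply intervalIntegral.integral_mono_on hx
    (Continuous.intervalIntegrable (by continuity) 0 x)
    (intervalIntegrable_const)
  intro t ht
  calc t ^ m * Real.exp (-t) ≤ x ^ m * 1 := by
        apply mul_le_mul (pow_le_pow_left₀ ht.1 ht.2 m)
          (Real.exp_le_one_iff.mpr (by linarith [ht.1])) (Real.exp_nonneg _) (by positivity)
    _ = x ^ m := by ring

lemma summable_mul_pow_div_factorial (K : ℝ) :
    Summable (fun m : ℕ => K ^ m * (m:ℝ) / (m ! : ℝ)) := by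
  rw [← summable_nat_add_iff 1]
  have : (fun m : ℕ => K ^ (m+1) * ((m+1 : ℕ):ℝ) / ((m+1)! : ℝ))
      = fun m : ℕ => K * (K ^ m / (m ! : ℝ)) := by
    funext m
    rw [Nat.factorial_succ]
    have h1 : ((m ! : ℕ):ℝ) ≠ 0 := Nat.cast_ne_zero.mpr (Nat.factorial_ne_zero m)
    push_cast
    field_simp
    ring
  rw [this]
  exact (Real.summable_pow_div_factorial K).mul_left K

lemma summable_comparison (c d : ℝ) :
    Summable (fun m : ℕ => c ^ m * d ^ (m+1) * (d + (m:ℝ) + 1) / (m ! : ℝ)) := by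
  have he : (fun m : ℕ => c ^ m * d ^ (m+1) * (d + (m:ℝ) + 1) / (m ! : ℝ))
      = fun m : ℕ => (d^2 + d) * ((c*d) ^ m / (m ! : ℝ)) + d * ((c*d) ^ m * (m:ℝ) / (m ! : ℝ)) := by
    funext m
    field_simp
    ring
  rw [he]
  exact (((Real.summable_pow_div_factorial (c*d)).mul_left _).add
    ((summable_mul_pow_div_factorial (c*d)).mul_left d))

lemma summable_u {c d : ℝ} (hc : 0 ≤ c) (hd : 0 ≤ d) (G : ℕ → ℝ)
    (hG0 : ∀ m, 0 ≤ G m) (hG : ∀ m, G m ≤ d ^ (m + 1)) :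
    Summable (fun m : ℕ => c ^ m / ((m ! : ℝ) * ((m+1)! : ℝ)) * G m * (d - ((m:ℝ) + 1))) := by
  apply Summable.of_norm_bounded (summable_comparison c d)
  intro m
  have hfac1 : (1:ℝ) ≤ ((m+1)! : ℝ) := by exact_mod_cast Nat.one_le_iff_ne_zero.mpr (Nat.factorial_ne_zero (m+1))
  have hfacpos : (0:ℝ) < (m ! : ℝ) := by exact_mod_cast Nat.factorial_pos m
  rw [norm_mul, norm_mul, Real.norm_eq_abs, Real.norm_eq_abs, Real.norm_eq_abs,
    abs_of_nonneg (by positivity), abs_of_nonneg (hG0 m)]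
  have hA : c ^ m / ((m ! : ℝ) * ((m+1)! : ℝ)) ≤ c ^ m / (m ! : ℝ) := by
    apply div_le_div_of_nonneg_left (by positivity) hfacpos
    nlinarith
  have hC : |d - ((m:ℝ) + 1)| ≤ d + (m:ℝ) + 1 := by
    rw [abs_sub_comm]
    calc |((m:ℝ) + 1) - d| ≤ |(m:ℝ)+1| + |d| := abs_sub _ _
      _ = (m:ℝ) + 1 + d := by rw [abs_of_nonneg (by positivity), abs_of_nonneg hd]
      _ = d + (m:ℝ) + 1 := by ring
  calc c ^ m / ((m ! : ℝ) * ((m+1)! : ℝ)) * G m * |d - ((m:ℝ) + 1)|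
      ≤ c ^ m / (m ! : ℝ) * d ^ (m+1) * (d + (m:ℝ) + 1) := by
        apply mul_le_mul (mul_le_mul hA (hG m) (hG0 m) (by positivity)) hC (abs_nonneg _)
          (by positivity)
    _ = c ^ m * d ^ (m+1) * (d + (m:ℝ) + 1) / (m ! : ℝ) := by ring

lemma summable_w (K : ℝ) (hK : 0 ≤ K) :
    Summable (fun m : ℕ => K ^ (m+1) / ((m ! : ℝ) * ((m+1)! : ℝ))) := by
  apply Summable.of_norm_bounded ((Real.summable_pow_div_factorial K).mul_left K)
  intro m
  have hfac1 : (1:ℝ) ≤ ((m+1)! : ℝ) := by exact_mod_cast Nat.one_le_iff_ne_zero.mpr (Nat.factorial_ne_zero (m+1))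
  have hfacpos : (0:ℝ) < (m ! : ℝ) := by exact_mod_cast Nat.factorial_pos m
  rw [Real.norm_eq_abs, abs_of_nonneg (by positivity)]
  calc K ^ (m+1) / ((m ! : ℝ) * ((m+1)! : ℝ)) ≤ K ^ (m+1) / ((m ! : ℝ) * 1) := by
        apply div_le_div_of_nonneg_left (by positivity) (by positivity)
        nlinarith
    _ = K * (K ^ m / (m ! : ℝ)) := by rw [pow_succ]; ring


set_option maxHeartbeats 4000000 in
lemma per_m (p lam μ q r : ℝ) (hp : 0 < p) (hlam : 0 < lam) (hμ : 0 < μ) (hq : 0 < q)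
    (hr : 0 < r) (m : ℕ) :
    (∫ y in (0:ℝ)..(p * r),
      deriv (Wq p lam μ q) (p * r - y) * ((p * r - y) / r) * Real.exp (-μ * y) *
        ((μ * lam * r) ^ (m + 1) / ((m ! : ℝ) * ((m + 1)! : ℝ)) * y ^ m))
    = Am p lam μ q * qp p lam μ q * Real.exp (qp p lam μ q * (p * r)) *
        ((p * r * (qm p lam μ q + μ)) ^ m / ((m ! : ℝ) * ((m + 1)! : ℝ)) *
          lowerGamma ((m : ℝ) + 1) ((qp p lam μ q + μ) * (p * r)) *
          (p * r * (qp p lam μ q + μ) - ((m : ℝ) + 1)))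
      - Ap p lam μ q * qm p lam μ q * Real.exp (qm p lam μ q * (p * r)) *
        ((p * r * (qp p lam μ q + μ)) ^ m / ((m ! : ℝ) * ((m + 1)! : ℝ)) *
          lowerGamma ((m : ℝ) + 1) ((qm p lam μ q + μ) * (p * r)) *
          (p * r * (qm p lam μ q + μ) - ((m : ℝ) + 1)))
      + Real.exp (-μ * (p * r)) / (p * r) *
        ((p * lam * μ * r ^ 2) ^ (m + 1) / ((m ! : ℝ) * ((m + 1)! : ℝ))) := by
  have hβμ := beta_mul hp hlam hμ hq
  have hβp := betap_pos hp hlam hμ hq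
  have hβm := betam_pos hp hlam hμ hq
  have hd := qp_sub_qm_pos hp hlam hμ hq
  rw [deriv_Wq]
  simp only [Ap, Am]
  set α := qp p lam μ q with hαdef
  set δ := qm p lam μ q with hδdef
  set a := p * r with hadef
  have ha : 0 < a := mul_pos hp hr
  clear_value α δ a
  set c : ℝ := (μ * lam * r) ^ (m + 1) / ((m ! : ℝ) * ((m + 1)! : ℝ)) with hcdef
  set K1 : ℝ := 1 / (p * r) * ((μ + α) / (α - δ)) * α * Real.exp (α * a) * c with hK1def
  set K2 : ℝ := 1 / (p * r) * ((μ + δ) / (α - δ)) * δ * Real.exp (δ * a) * c with hK2def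
  clear_value c K1 K2
  have hcongr : Set.EqOn
      (fun y => 1 / p * ((μ + α) / (α - δ) * (α * Real.exp (α * (a - y)))
          - (μ + δ) / (α - δ) * (δ * Real.exp (δ * (a - y)))) * ((a - y) / r) *
          Real.exp (-μ * y) * (c * y ^ m))
      (fun y => K1 * ((a - y) * Real.exp (-((α + μ) * y)) * y ^ m)
          - K2 * ((a - y) * Real.exp (-((δ + μ) * y)) * y ^ m)) (Set.uIcc 0 a) := by
    intro y _
    simp only [hK1def, hK2def]
    have e1 : Real.exp (α * (a - y)) * Real.exp (-μ * y)
        = Real.exp (α * a) * Real.exp (-((α + μ) * y)) := by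
      rw [← Real.exp_add, ← Real.exp_add]; congr 1; ring
    have e2 : Real.exp (δ * (a - y)) * Real.exp (-μ * y)
        = Real.exp (δ * a) * Real.exp (-((δ + μ) * y)) := by
      rw [← Real.exp_add, ← Real.exp_add]; congr 1; ring
    linear_combination (1 / p * ((μ + α) / (α - δ)) * α * ((a - y) / r) * (c * y ^ m)) * e1
      - (1 / p * ((μ + δ) / (α - δ)) * δ * ((a - y) / r) * (c * y ^ m)) * e2
  rw [intervalIntegral.integral_congr hcongr]
  have i1 : IntervalIntegrable
      (fun y => K1 * ((a - y) * Real.exp (-((α + μ) * y)) * y ^ m)) volume 0 a :=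
    Continuous.intervalIntegrable (by fun_prop) 0 a
  have i2 : IntervalIntegrable
      (fun y => K2 * ((a - y) * Real.exp (-((δ + μ) * y)) * y ^ m)) volume 0 a :=
    Continuous.intervalIntegrable (by fun_prop) 0 a
  rw [intervalIntegral.integral_sub i1 i2, intervalIntegral.integral_const_mul,
    intervalIntegral.integral_const_mul, key_integral m (ne_of_gt hβp),
    key_integral m (ne_of_gt hβm)]
  -- eliminate lam
  field_simp at hβμ
  have hml : μ * lam * r = a * ((α + μ) * (δ + μ)) := by
    rw [hadef]; linear_combination (-r) * hβμ
  have hml2 : p * lam * μ * r ^ 2 = a ^ 2 * ((α + μ) * (δ + μ)) := by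
    rw [hadef]; linear_combination (-(p * r ^ 2)) * hβμ
  -- eliminate mixed exponentials
  have hE1 : Real.exp (-((α + μ) * a)) = Real.exp (-μ * a) / Real.exp (α * a) := by
    rw [eq_div_iff (Real.exp_ne_zero _), ← Real.exp_add]; congr 1; ring
  have hE2 : Real.exp (-((δ + μ) * a)) = Real.exp (-μ * a) / Real.exp (δ * a) := by
    rw [eq_div_iff (Real.exp_ne_zero _), ← Real.exp_add]; congr 1; ring
  simp only [hK1def, hK2def, hcdef, hml, hml2, hE1, hE2, ← hadef, mul_pow]
  have h1 : ((m ! : ℝ) * ((m + 1)! : ℝ)) ≠ 0 := by positivity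
  have h2 : (α + μ) ^ (m + 2) ≠ 0 := pow_ne_zero _ (ne_of_gt hβp)
  have h3 : (δ + μ) ^ (m + 2) ≠ 0 := pow_ne_zero _ (ne_of_gt hβm)
  have h4 : α - δ ≠ 0 := ne_of_gt hd
  have h5 : Real.exp (α * a) ≠ 0 := Real.exp_ne_zero _
  have h6 : Real.exp (δ * a) ≠ 0 := Real.exp_ne_zero _
  have h7 : a ≠ 0 := ne_of_gt ha
  field_simp
  ring


lemma summable_ff {K : ℝ} (hK : 0 ≤ K) :
    Summable (fun m : ℕ => K ^ m / ((m ! : ℝ) * ((m + 1)! : ℝ))) := by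
  apply Summable.of_norm_bounded (Real.summable_pow_div_factorial K)
  intro m
  have hfac1 : (1:ℝ) ≤ ((m+1)! : ℝ) := by
    exact_mod_cast Nat.one_le_iff_ne_zero.mpr (Nat.factorial_ne_zero (m+1))
  have hfacpos : (0:ℝ) < (m ! : ℝ) := by exact_mod_cast Nat.factorial_pos m
  rw [Real.norm_eq_abs, abs_of_nonneg (by positivity)]
  calc K ^ m / ((m ! : ℝ) * ((m+1)! : ℝ)) ≤ K ^ m / ((m ! : ℝ) * 1) := by
        apply div_le_div_of_nonneg_left (by positivity) (by positivity)
        nlinarith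
    _ = K ^ m / (m ! : ℝ) := by ring

lemma main_integral (p lam μ q r : ℝ) (hp : 0 < p) (hlam : 0 < lam) (hμ : 0 < μ) (hq : 0 < q)
    (hr : 0 < r) :
    (∫ y in (0 : ℝ)..(p * r),
        deriv (Wq p lam μ q) (p * r - y) * ((p * r - y) / r) * Real.exp (-μ * y) *
          ∑' m : ℕ, (μ * lam * r) ^ (m + 1) / ((m ! : ℝ) * ((m + 1)! : ℝ)) * y ^ m)
    = Am p lam μ q * qp p lam μ q * Real.exp (qp p lam μ q * (p * r)) *
        (∑' m : ℕ, (p * r * (qm p lam μ q + μ)) ^ m / ((m ! : ℝ) * ((m + 1)! : ℝ)) *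
          lowerGamma ((m : ℝ) + 1) ((qp p lam μ q + μ) * (p * r)) *
          (p * r * (qp p lam μ q + μ) - ((m : ℝ) + 1)))
      - Ap p lam μ q * qm p lam μ q * Real.exp (qm p lam μ q * (p * r)) *
        (∑' m : ℕ, (p * r * (qp p lam μ q + μ)) ^ m / ((m ! : ℝ) * ((m + 1)! : ℝ)) *
          lowerGamma ((m : ℝ) + 1) ((qm p lam μ q + μ) * (p * r)) *
          (p * r * (qm p lam μ q + μ) - ((m : ℝ) + 1)))
      + Real.exp (-μ * (p * r)) / (p * r) *
        (∑' m : ℕ, (p * lam * μ * r ^ 2) ^ (m + 1) / ((m ! : ℝ) * ((m + 1)! : ℝ))) := by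
  have h0a : (0:ℝ) ≤ p * r := le_of_lt (mul_pos hp hr)
  have hβp := betap_pos hp hlam hμ hq
  have hβm := betam_pos hp hlam hμ hq
  -- the summand functions
  set g : ℕ → ℝ → ℝ := fun m y =>
    deriv (Wq p lam μ q) (p * r - y) * ((p * r - y) / r) * Real.exp (-μ * y) *
      ((μ * lam * r) ^ (m + 1) / ((m ! : ℝ) * ((m + 1)! : ℝ)) * y ^ m) with hg
  have hgc : ∀ m, Continuous (g m) := by
    intro m
    rw [hg]
    simp only [deriv_Wq]
    fun_prop
  -- bound for the non-series factor
  obtain ⟨M, hM⟩ := IsCompact.exists_bound_of_continuousOn (isCompact_Icc (a := (0:ℝ)) (b := p*r))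
    (f := fun y => deriv (Wq p lam μ q) (p * r - y) * ((p * r - y) / r) * Real.exp (-μ * y))
    (by simp only [deriv_Wq]; fun_prop)
  have hM0 : 0 ≤ M := le_trans (norm_nonneg _) (hM 0 ⟨le_refl _, h0a⟩)
  have step1 : (∫ y in (0 : ℝ)..(p * r),
        deriv (Wq p lam μ q) (p * r - y) * ((p * r - y) / r) * Real.exp (-μ * y) *
          ∑' m : ℕ, (μ * lam * r) ^ (m + 1) / ((m ! : ℝ) * ((m + 1)! : ℝ)) * y ^ m)
      = ∫ y in (0 : ℝ)..(p * r), ∑' m : ℕ, g m y :=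
    intervalIntegral.integral_congr (fun y _ => (tsum_mul_left).symm)
  have hInt : ∀ m : ℕ, Integrable (g m) (volume.restrict (Set.Ioc 0 (p * r))) := by
    intro m
    exact ((hgc m).integrableOn_Icc).mono_set Set.Ioc_subset_Icc_self
  have hJle : ∀ m : ℕ, (∫ y in Set.Ioc (0:ℝ) (p * r), ‖g m y‖)
      ≤ M * ((μ * lam * r) ^ (m + 1) / ((m ! : ℝ) * ((m + 1)! : ℝ)) * (p * r) ^ m) * (p * r) := by
    intro m
    have hcm : (0:ℝ) ≤ (μ * lam * r) ^ (m + 1) / ((m ! : ℝ) * ((m + 1)! : ℝ)) := by positivity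
    have hb : ∀ y ∈ Set.Ioc (0:ℝ) (p * r),
        ‖(‖g m y‖)‖ ≤ M * ((μ * lam * r) ^ (m + 1) / ((m ! : ℝ) * ((m + 1)! : ℝ)) * (p * r) ^ m) := by
      intro y hy
      rw [norm_norm, hg]
      simp only []
      rw [norm_mul]
      apply mul_le_mul (hM y ⟨hy.1.le, hy.2⟩)
      · rw [Real.norm_eq_abs, abs_of_nonneg (mul_nonneg hcm (pow_nonneg hy.1.le m))]
        gcongr
        · exact hy.1.le
        · exact hy.2
      · exact norm_nonneg _
      · exact hM0
    have := norm_setIntegral_le_of_norm_le_const (μ := volume) (s := Set.Ioc (0:ℝ) (p*r))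
      (f := fun y => ‖g m y‖) (by rw [Real.volume_Ioc]; exact ENNReal.ofReal_lt_top) hb
    rw [Real.norm_of_nonneg (integral_nonneg (fun y => norm_nonneg _)), Real.volume_real_Ioc_of_le (by linarith : (0:ℝ) ≤ p * r), sub_zero] at this
    exact this
  have hSum : Summable (fun m : ℕ => ∫ y in Set.Ioc (0:ℝ) (p * r), ‖g m y‖) := by
    apply Summable.of_nonneg_of_le (fun m => integral_nonneg (fun y => norm_nonneg _)) hJle
    have he : (fun m : ℕ => M * ((μ * lam * r) ^ (m + 1) / ((m ! : ℝ) * ((m + 1)! : ℝ)) * (p * r) ^ m) * (p * r))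
        = fun m : ℕ => M * ((μ * lam * r * (p * r)) ^ (m + 1) / ((m ! : ℝ) * ((m + 1)! : ℝ))) := by
      funext m
      rw [mul_pow]
      ring
    rw [he]
    exact (summable_w (μ * lam * r * (p * r)) (by positivity)).mul_left _
  have step2 : (∫ y in (0 : ℝ)..(p * r), ∑' m : ℕ, g m y)
      = ∑' m : ℕ, ∫ y in (0 : ℝ)..(p * r), g m y := by
    rw [intervalIntegral.integral_of_le h0a]
    rw [← MeasureTheory.integral_tsum_of_summable_integral_norm hInt hSum]
    apply tsum_congr
    intro m
    rw [intervalIntegral.integral_of_le h0a]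
  rw [step1, step2]
  have step3 : ∀ m : ℕ, (∫ y in (0 : ℝ)..(p * r), g m y)
      = Am p lam μ q * qp p lam μ q * Real.exp (qp p lam μ q * (p * r)) *
          ((p * r * (qm p lam μ q + μ)) ^ m / ((m ! : ℝ) * ((m + 1)! : ℝ)) *
            lowerGamma ((m : ℝ) + 1) ((qp p lam μ q + μ) * (p * r)) *
            (p * r * (qp p lam μ q + μ) - ((m : ℝ) + 1)))
        - Ap p lam μ q * qm p lam μ q * Real.exp (qm p lam μ q * (p * r)) *
          ((p * r * (qp p lam μ q + μ)) ^ m / ((m ! : ℝ) * ((m + 1)! : ℝ)) *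
            lowerGamma ((m : ℝ) + 1) ((qm p lam μ q + μ) * (p * r)) *
            (p * r * (qm p lam μ q + μ) - ((m : ℝ) + 1)))
        + Real.exp (-μ * (p * r)) / (p * r) *
          ((p * lam * μ * r ^ 2) ^ (m + 1) / ((m ! : ℝ) * ((m + 1)! : ℝ))) :=
    fun m => per_m p lam μ q r hp hlam hμ hq hr m
  rw [tsum_congr step3]
  -- summability of the three parts
  have s1 : Summable (fun m : ℕ => (p * r * (qm p lam μ q + μ)) ^ m / ((m ! : ℝ) * ((m + 1)! : ℝ)) *
      lowerGamma ((m : ℝ) + 1) ((qp p lam μ q + μ) * (p * r)) *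
      (p * r * (qp p lam μ q + μ) - ((m : ℝ) + 1))) := by
    apply summable_u (by positivity) (by positivity)
    · intro m
      exact lowerGamma_nonneg m (by positivity)
    · intro m
      rw [show p * r * (qp p lam μ q + μ) = (qp p lam μ q + μ) * (p * r) by ring]
      exact lowerGamma_le m (by positivity)
  have s2 : Summable (fun m : ℕ => (p * r * (qp p lam μ q + μ)) ^ m / ((m ! : ℝ) * ((m + 1)! : ℝ)) *
      lowerGamma ((m : ℝ) + 1) ((qm p lam μ q + μ) * (p * r)) *
      (p * r * (qm p lam μ q + μ) - ((m : ℝ) + 1))) := by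
    apply summable_u (by positivity) (by positivity)
    · intro m
      exact lowerGamma_nonneg m (by positivity)
    · intro m
      rw [show p * r * (qm p lam μ q + μ) = (qm p lam μ q + μ) * (p * r) by ring]
      exact lowerGamma_le m (by positivity)
  have s3 : Summable (fun m : ℕ => (p * lam * μ * r ^ 2) ^ (m + 1) / ((m ! : ℝ) * ((m + 1)! : ℝ))) :=
    summable_w _ (by positivity)
  have t1 := s1.mul_left (Am p lam μ q * qp p lam μ q * Real.exp (qp p lam μ q * (p * r)))
  have t2 := s2.mul_left (Ap p lam μ q * qm p lam μ q * Real.exp (qm p lam μ q * (p * r)))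
  have t3 := s3.mul_left (Real.exp (-μ * (p * r)) / (p * r))
  rw [Summable.tsum_add (t1.sub t2) t3, Summable.tsum_sub t1 t2, tsum_mul_left, tsum_mul_left, tsum_mul_left]

theorem integral_Wq_deriv_CL (p lam μ q r : ℝ)
    (hp : 0 < p) (hlam : 0 < lam) (hμ : 0 < μ) (hq : 0 < q) (hr : 0 < r) :
    Real.exp (-lam * r) *
        (p * deriv (Wq p lam μ q) (p * r) +
          ∫ y in (0 : ℝ)..(p * r),
            deriv (Wq p lam μ q) (p * r - y) * ((p * r - y) / r) * Real.exp (-μ * y) *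
              ∑' m : ℕ, (μ * lam * r) ^ (m + 1) /
                ((Nat.factorial m : ℝ) * (Nat.factorial (m + 1) : ℝ)) * y ^ m)
      = Cconst p lam μ q r := by
  have key := main_integral p lam μ q r hp hlam hμ hq hr
  unfold Cconst
  rw [key]
  ring
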